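/- For the equality-constrained instance W = 1000, w = (300, 250), q = Q = (7, 100): every waste-minimal feasible solution uses at least 3 distinct patterns. Hence an instance with m = 2 orders can require m + 1 = 3 patterns. -/
import Mathlib


/-- A pattern for master size 1000 with sizes (300, 250). -/
def ValidPattern (a : Fin 2 → ℕ) : Prop :=
  300 * a 0 + 250 * a 1 ≤ 1000

/-- Equality-constrained feasibility for demands (7, 100). -/
def Feasible (x : (Fin 2 → ℕ) →₀ ℕ) : Prop :=
  (∀ a ∈ x.support, ValidPattern a) ∧
  x.sum (fun a c => c * a 0) = 7 ∧
  x.sum (fun a c => c * a 1) = 100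

/-- Total waste of a solution. -/
def waste (x : (Fin 2 → ℕ) →₀ ℕ) : ℕ :=
  x.sum (fun a c => c * (1000 - (300 * a 0 + 250 * a 1)))

noncomputable def y0 : (Fin 2 → ℕ) →₀ ℕ :=
  Finsupp.single ![3,0] 2 + Finsupp.single ![1,2] 1 +
  Finsupp.single ![0,4] 23 + Finsupp.single ![0,3] 2

lemma y0_sum (g : (Fin 2 → ℕ) → ℕ) :
    y0.sum (fun a c => c * g a) =
      2 * g ![3,0] + g ![1,2] + 23 * g ![0,4] + 2 * g ![0,3] := by
  unfold y0
  rw [Finsupp.sum_add_index' (fun a => zero_mul (g a)) (fun a b c => add_mul b c (g a)),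
      Finsupp.sum_add_index' (fun a => zero_mul (g a)) (fun a b c => add_mul b c (g a)),
      Finsupp.sum_add_index' (fun a => zero_mul (g a)) (fun a b c => add_mul b c (g a)),
      ]
  simp only [Finsupp.sum_single_index, zero_mul]
  ring

lemma y0_feasible : Feasible y0 := by
  refine ⟨?_, ?_, ?_⟩
  · intro a ha
    rw [Finsupp.mem_support_iff] at ha
    simp only [y0, Finsupp.add_apply, Finsupp.single_apply] at ha
    split_ifs at ha <;> rename_i h1 h2 h3 h4 <;>
      first
        | (rw [← h1]; norm_num [ValidPattern])
        | (rw [← h2]; norm_num [ValidPattern])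
        | (rw [← h3]; norm_num [ValidPattern])
        | (rw [← h4]; norm_num [ValidPattern])
        | simp at ha
  · rw [show (fun (a : Fin 2 → ℕ) (c : ℕ) => c * a 0) = fun a c => c * (fun a => a 0) a from rfl,
      y0_sum]
    norm_num
  · rw [show (fun (a : Fin 2 → ℕ) (c : ℕ) => c * a 1) = fun a c => c * (fun a => a 1) a from rfl,
      y0_sum]
    norm_num

lemma y0_waste : waste y0 = 900 := by
  rw [waste, y0_sum (fun a => 1000 - (300 * a 0 + 250 * a 1))]
  norm_num

lemma used_eq (x : (Fin 2 → ℕ) →₀ ℕ) (h0 : x.sum (fun a c => c * a 0) = 7)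
    (h1 : x.sum (fun a c => c * a 1) = 100) :
    x.sum (fun a c => c * (300 * a 0 + 250 * a 1)) = 27100 := by
  rw [Finsupp.sum] at h0 h1 ⊢
  calc ∑ a ∈ x.support, x a * (300 * a 0 + 250 * a 1)
      = ∑ a ∈ x.support, (300 * (x a * a 0) + 250 * (x a * a 1)) := by
        apply Finset.sum_congr rfl; intro a _; ring
    _ = 300 * ∑ a ∈ x.support, x a * a 0 + 250 * ∑ a ∈ x.support, x a * a 1 := by
        rw [Finset.sum_add_distrib, Finset.mul_sum, Finset.mul_sum]
    _ = 27100 := by rw [h0, h1]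

lemma count_eq (x : (Fin 2 → ℕ) →₀ ℕ) (hv : ∀ a ∈ x.support, ValidPattern a) :
    waste x + x.sum (fun a c => c * (300 * a 0 + 250 * a 1)) =
      1000 * x.sum (fun _ c => c) := by
  rw [waste, Finsupp.sum, Finsupp.sum, Finsupp.sum, ← Finset.sum_add_distrib,
    Finset.mul_sum]
  apply Finset.sum_congr rfl
  intro a ha
  have hu := hv a ha
  unfold ValidPattern at hu
  rw [← Nat.mul_add, Nat.sub_add_cancel hu, Nat.mul_comm]

lemma no_two (c d p q r s : ℕ) (hc : c ≠ 0) (hd : d ≠ 0) (hcd : c + d = 28)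
    (h0 : c * p + d * r = 7) (h1 : c * q + d * s = 100)
    (hva : 300 * p + 250 * q ≤ 1000) (hvb : 300 * r + 250 * s ≤ 1000) : False := by
  have hp : p ≤ 3 := by omega
  have hr : r ≤ 3 := by omega
  interval_cases p <;> interval_cases r <;>
    first
      | omega
      | (have e1 : c = 21 := by omega
         have e2 : d = 7 := by omega
         subst e1; subst e2; omega)
      | (have e1 : c = 7 := by omega
         have e2 : d = 21 := by omega
         subst e1; subst e2; omega)

/-- for W = 1000, w = (300, 250), q = Q = (7, 100), every
waste-minimal feasible solution uses at least 3 distinct patterns; so an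
instance with m = 2 orders can require m + 1 = 3 patterns. -/
theorem stmt9 :
    ∀ x, Feasible x → (∀ y, Feasible y → waste x ≤ waste y) →
      3 ≤ x.support.card := by
  intro x hx hmin
  obtain ⟨hv, h0, h1⟩ := hx
  have hused := used_eq x h0 h1
  have hN := count_eq x hv
  rw [hused] at hN
  clear hused
  have hw : waste x ≤ 900 := le_of_le_of_eq (hmin y0 y0_feasible) y0_waste
  by_contra hcard
  have h3 : x.support.card = 0 ∨ x.support.card = 1 ∨ x.support.card = 2 := by
    clear h0 h1; omega
  rcases h3 with h | h | h
  · rw [Finset.card_eq_zero] at h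
    rw [Finsupp.sum, h, Finset.sum_empty] at h0
    exact absurd h0 (by norm_num)
  · obtain ⟨a, hs⟩ := Finset.card_eq_one.mp h
    rw [Finsupp.sum, hs, Finset.sum_singleton] at h0 h1 hN
    have e : x a = 28 := by omega
    rw [e] at h0
    omega
  · obtain ⟨a, b, hab, hs⟩ := Finset.card_eq_two.mp h
    have hma : a ∈ x.support := by rw [hs]; simp
    have hmb : b ∈ x.support := by rw [hs]; simp
    have hxa : x a ≠ 0 := Finsupp.mem_support_iff.mp hma
    have hxb : x b ≠ 0 := Finsupp.mem_support_iff.mp hmb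
    have hva := hv a hma
    have hvb := hv b hmb
    unfold ValidPattern at hva hvb
    rw [Finsupp.sum, hs, Finset.sum_pair hab] at h0 h1 hN
    have hcd : x a + x b = 28 := by omega
    exact no_two (x a) (x b) (a 0) (a 1) (b 0) (b 1) hxa hxb hcd h0 h1 hva hvb
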